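/- arXiv:2307.13486 — 2 statements merged into one kernel-verified Lean document; each statement's English description precedes it below -/
import Mathlib

section
/- Let π = {π_1,…,π_k} be a set partition of [n], let u = (u_I)_{I⊆[n]} be real numbers, and define v^{(i)}_J = Σ { u_I : I ⊆ [n], I ∩ π_i = J } for J ⊆ π_i. Suppose Θ is a real symmetric n×n matrix that is block diagonal with respect to π, each diagonal block Θ_{π_i} is positive definite, and each Θ_{π_i} is a critical point of L_{v^{(i)}} (all partial derivatives of L_{v^{(i)}} with respect to the entries of the block vanish). Then Θ is a critical point of L_u, i.e., all partial derivatives of L_u with respect to the entries θ_{ab} (a ≤ b, a,b ∈ [n]) vanish at Θ. -/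
/-! Fix a block `B` of the partition and a direction `θ_ab` with `a ∈ B`.

If `b ∉ B`, conjugating by the diagonal sign matrix that is `-1` on `B` and `1` off `B` fixes `Θ`,
preserves every principal minor (hence `L_u`), but reverses the direction `θ_ab`; so
`t ↦ L_u(Θ + t E_ab)` is even and its derivative at `0` vanishes.

If `b ∈ B`, then `M = Θ + t E_ab` is block diagonal with respect to `{B, Bᶜ}`, so each of its
principal minors factors as `det(M_{I ∩ B}) · det(M_{I ∩ Bᶜ})`. Since `Θ` is positive definite (its
blocks are), these minors stay nonzero for small `t`, and grouping the subsets `I` by `I ∩ B` gives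
`L_u(M) = L_{v^B}(M_B) + L_{v^{Bᶜ}}(M_{Bᶜ})`. Only the first summand depends on `t`, and its
derivative vanishes because `Θ_B` is a critical point of `L_{v^B}`. -/

noncomputable section

/-- The principal minor of `Θ` indexed by the subset `I` (with `det(Θ_∅) = 1`). -/
def principalMinor {ι : Type*} [DecidableEq ι] (Θ : Matrix ι ι ℝ) (I : Finset ι) : ℝ :=
  (Θ.submatrix (fun a : {x // x ∈ I} => (a : ι)) (fun a : {x // x ∈ I} => (a : ι))).det

/-- The log-likelihood function of the determinantal point process model:
`L_u(Θ) = Σ_I u_I · log det(Θ_I) − (Σ_I u_I) · log det(Θ + Id)`. -/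
def logLik {ι : Type*} [Fintype ι] [DecidableEq ι]
    (u : Finset ι → ℝ) (Θ : Matrix ι ι ℝ) : ℝ :=
  (∑ I : Finset ι, u I * Real.log (principalMinor Θ I))
    - (∑ I : Finset ι, u I) * Real.log (Θ + 1).det

/-- The symmetric coordinate direction for the entry `θ_{ab}` of a symmetric matrix:
`E_{aa}` if `a = b`, and `E_{ab} + E_{ba}` if `a ≠ b`. -/
def symDir {ι : Type*} [DecidableEq ι] (a b : ι) : Matrix ι ι ℝ :=
  if a = b then Matrix.single a a 1
  else Matrix.single a b 1 + Matrix.single b a 1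

/-- `Θ` is a critical point of `L_u`: all partial derivatives of `L_u` with respect to
the entries `θ_{ab}` of the symmetric matrix vanish at `Θ`. -/
def IsCriticalPoint {ι : Type*} [Fintype ι] [DecidableEq ι]
    (u : Finset ι → ℝ) (Θ : Matrix ι ι ℝ) : Prop :=
  ∀ a b : ι, deriv (fun t : ℝ => logLik u (Θ + t • symDir a b)) 0 = 0

/-- The diagonal block `Θ_B` of `Θ` with rows and columns indexed by `B`. -/
def blockSub {ι : Type*} (Θ : Matrix ι ι ℝ) (B : Finset ι) :
    Matrix {x // x ∈ B} {x // x ∈ B} ℝ :=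
  Θ.submatrix (fun a => (a : ι)) (fun a => (a : ι))

/-- The restricted data vector `v` on subsets of the block `B`:
`v_J = Σ { u_I : I ⊆ [n], I ∩ B = J }`. -/
def restrictData {ι : Type*} [Fintype ι] [DecidableEq ι]
    (u : Finset ι → ℝ) (B : Finset ι) (J : Finset {x // x ∈ B}) : ℝ :=
  ∑ I ∈ Finset.univ.filter
      (fun I : Finset ι => I ∩ B = J.map (Function.Embedding.subtype (· ∈ B))), u I

open Matrix Finset Filter Topology

section BlockDiag

variable {ι : Type*}

/-- Block diagonality with respect to `{B, Bᶜ}`: entries with exactly one index in `B` vanish. -/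
def IsBlockDiag {α : Type*} [Zero α] (M : Matrix ι ι α) (B : Finset ι) : Prop :=
  ∀ i j, (i ∈ B ↔ j ∉ B) → M i j = 0

variable {M N : Matrix ι ι ℝ} {B : Finset ι}

lemma IsBlockDiag.add (hM : IsBlockDiag M B) (hN : IsBlockDiag N B) : IsBlockDiag (M + N) B :=
  fun i j h => by rw [Matrix.add_apply, hM i j h, hN i j h, add_zero]

lemma IsBlockDiag.smul (hM : IsBlockDiag M B) (t : ℝ) : IsBlockDiag (t • M) B :=
  fun i j h => by rw [Matrix.smul_apply, hM i j h, smul_zero]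

lemma blockSub_add (M N : Matrix ι ι ℝ) (B : Finset ι) :
    blockSub (M + N) B = blockSub M B + blockSub N B := rfl

lemma blockSub_smul (t : ℝ) (M : Matrix ι ι ℝ) (B : Finset ι) :
    blockSub (t • M) B = t • blockSub M B := rfl

variable [DecidableEq ι]

lemma isBlockDiag_one : IsBlockDiag (1 : Matrix ι ι ℝ) B :=
  fun i j h => one_apply_ne fun hij => by subst hij; tauto

lemma symDir_apply (a b i j : ι) :
    symDir a b i j = if (i = a ∧ j = b) ∨ (i = b ∧ j = a) then 1 else 0 := by
  unfold symDir
  split_ifs <;> simp only [Matrix.add_apply, single_apply] <;> grind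

lemma isBlockDiag_symDir {a b : ι} (ha : a ∈ B) (hb : b ∈ B) : IsBlockDiag (symDir a b) B :=
  fun i j h => by rw [symDir_apply, if_neg]; grind

lemma symDir_apply_of_mem_iff_mem {a b : ι} (ha : a ∈ B) (hb : b ∉ B) {i j : ι}
    (h : i ∈ B ↔ j ∈ B) : symDir a b i j = 0 := by
  rw [symDir_apply, if_neg]; grind

lemma blockSub_one (B : Finset ι) : blockSub (1 : Matrix ι ι ℝ) B = 1 :=
  submatrix_one _ Subtype.val_injective

lemma blockSub_add_one (M : Matrix ι ι ℝ) (B : Finset ι) :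
    blockSub (M + 1) B = blockSub M B + 1 := by
  rw [blockSub_add, blockSub_one]

lemma blockSub_symDir {a b : ι} (ha : a ∈ B) (hb : b ∈ B) :
    blockSub (symDir a b) B = symDir ⟨a, ha⟩ ⟨b, hb⟩ := by
  ext p q
  simp only [blockSub, submatrix_apply, symDir_apply, Subtype.ext_iff]

lemma blockSub_symDir_of_notMem {a : ι} (b : ι) (ha : a ∉ B) : blockSub (symDir a b) B = 0 := by
  ext p q
  simp only [blockSub, submatrix_apply, symDir_apply, Matrix.zero_apply]
  grind

end BlockDiag

section PrincipalMinor

variable {ι : Type*} [DecidableEq ι]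

lemma principalMinor_eq_det_submatrix {κ : Type*} [Fintype κ] [DecidableEq κ]
    (M : Matrix ι ι ℝ) {I : Finset ι} (e : κ ≃ I) :
    principalMinor M I = (M.submatrix (fun k => (e k : ι)) (fun k => e k)).det :=
  (det_submatrix_equiv_self e _).symm

lemma principalMinor_univ [Fintype ι] (M : Matrix ι ι ℝ) : principalMinor M univ = M.det := by
  rw [principalMinor_eq_det_submatrix M (Equiv.subtypeUnivEquiv mem_univ).symm]
  rfl

lemma principalMinor_blockSub (M : Matrix ι ι ℝ) (B : Finset ι) (J : Finset B) :
    principalMinor (blockSub M B) J = principalMinor M (J.map (.subtype (· ∈ B))) := by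
  rw [principalMinor_eq_det_submatrix M (J.equivMap _)]
  rfl

lemma inter_eq_map_subtype_iff (I B : Finset ι) (J : Finset B) :
    I ∩ B = J.map (.subtype (· ∈ B)) ↔ (I ∩ B).subtype (· ∈ B) = J := by
  rw [← (map_injective (.subtype (· ∈ B))).eq_iff,
    subtype_map_of_mem fun _ hx => (mem_inter.mp hx).2, eq_comm]

lemma principalMinor_eq_mul [Fintype ι] {M : Matrix ι ι ℝ} {B : Finset ι} (hM : IsBlockDiag M B)
    (I : Finset ι) :
    principalMinor M I = principalMinor M (I ∩ B) * principalMinor M (I ∩ Bᶜ) := by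
  have hsplit := twoBlockTriangular_det (M.submatrix ((↑) : I → ι) (↑)) (fun i => (i : ι) ∈ B)
    fun i hi j hj => hM i j (iff_of_false hi (not_not.mpr hj))
  rw [principalMinor, hsplit,
    principalMinor_eq_det_submatrix M ((Equiv.subtypeSubtypeEquivSubtypeInter (· ∈ I) (· ∈ B)).trans
      (Equiv.subtypeEquivRight fun _ => mem_inter.symm)),
    principalMinor_eq_det_submatrix M ((Equiv.subtypeSubtypeEquivSubtypeInter (· ∈ I) (· ∉ B)).trans
      (Equiv.subtypeEquivRight fun _ => by rw [mem_inter, mem_compl]))]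
  rfl

lemma det_eq_det_blockSub_mul [Fintype ι] {M : Matrix ι ι ℝ} {B : Finset ι} (hM : IsBlockDiag M B) :
    M.det = (blockSub M B).det * (blockSub M Bᶜ).det := by
  have h := principalMinor_eq_mul hM univ
  rwa [principalMinor_univ, univ_inter, univ_inter] at h

lemma principalMinor_pos [Fintype ι] {M : Matrix ι ι ℝ} (hM : M.PosDef) (I : Finset ι) :
    0 < principalMinor M I :=
  (hM.submatrix Subtype.val_injective).det_pos

lemma continuous_principalMinor (I : Finset ι) :
    Continuous fun M : Matrix ι ι ℝ => principalMinor M I :=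
  (continuous_id.matrix_submatrix _ _).matrix_det

lemma Matrix.PosDef.eventually_principalMinor_ne_zero [Fintype ι] {M : Matrix ι ι ℝ}
    (hM : M.PosDef) : ∀ᶠ N in 𝓝 M, (∀ I, principalMinor N I ≠ 0) ∧ (N + 1).det ≠ 0 :=
  (eventually_all.2 fun I => (continuous_principalMinor I).continuousAt.eventually_ne
      (principalMinor_pos hM I).ne').and
    ((continuous_id.add continuous_const).matrix_det.continuousAt.eventually_ne
      (hM.add .one).det_pos.ne')

end PrincipalMinor

section LogLik

variable {ι : Type*} [Fintype ι] [DecidableEq ι]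

lemma sum_restrictData_mul (u : Finset ι → ℝ) (B : Finset ι) (f : Finset ι → ℝ) :
    ∑ J, restrictData u B J * f (J.map (.subtype (· ∈ B))) = ∑ I, u I * f (I ∩ B) := by
  simp only [restrictData, sum_mul, inter_eq_map_subtype_iff]
  rw [← sum_fiberwise univ (fun I => (I ∩ B).subtype (· ∈ B))]
  refine sum_congr rfl fun J _ => sum_congr rfl fun I hI => ?_
  rw [← (mem_filter.mp hI).2, subtype_map_of_mem fun _ hx => (mem_inter.mp hx).2]

lemma sum_restrictData (u : Finset ι → ℝ) (B : Finset ι) :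
    ∑ J, restrictData u B J = ∑ I, u I := by
  simpa using sum_restrictData_mul u B fun _ => 1

lemma logLik_restrictData_blockSub (u : Finset ι → ℝ) (M : Matrix ι ι ℝ) (B : Finset ι) :
    logLik (restrictData u B) (blockSub M B)
      = ∑ I, u I * Real.log (principalMinor M (I ∩ B))
        - (∑ I, u I) * Real.log (blockSub M B + 1).det := by
  simp only [logLik, principalMinor_blockSub, sum_restrictData]
  rw [sum_restrictData_mul u B fun K => Real.log (principalMinor M K)]

theorem logLik_eq_add_of_isBlockDiag {M : Matrix ι ι ℝ} {B : Finset ι} (hM : IsBlockDiag M B)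
    (hminor : ∀ I, principalMinor M I ≠ 0) (hdet : (M + 1).det ≠ 0) (u : Finset ι → ℝ) :
    logLik u M
      = logLik (restrictData u B) (blockSub M B) + logLik (restrictData u Bᶜ) (blockSub M Bᶜ) := by
  have hdet_eq := det_eq_det_blockSub_mul (hM.add isBlockDiag_one)
  rw [blockSub_add_one, blockSub_add_one] at hdet_eq
  obtain ⟨hdetB, hdetBc⟩ := mul_ne_zero_iff.mp (hdet_eq ▸ hdet)
  have hsum : ∑ I, u I * Real.log (principalMinor M I)
      = ∑ I, u I * Real.log (principalMinor M (I ∩ B))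
        + ∑ I, u I * Real.log (principalMinor M (I ∩ Bᶜ)) := by
    rw [← sum_add_distrib]
    refine sum_congr rfl fun I _ => ?_
    rw [principalMinor_eq_mul hM, Real.log_mul (hminor _) (hminor _), mul_add]
  rw [logLik, hsum, logLik_restrictData_blockSub, logLik_restrictData_blockSub, hdet_eq,
    Real.log_mul hdetB hdetBc]
  ring

lemma principalMinor_diagonal_mul_mul_diagonal {d : ι → ℝ} (hd : ∀ i, d i * d i = 1)
    (M : Matrix ι ι ℝ) (I : Finset ι) :
    principalMinor (diagonal d * M * diagonal d) I = principalMinor M I := by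
  have hsub : (diagonal d * M * diagonal d).submatrix ((↑) : I → ι) (↑)
      = diagonal (fun i : I => d i) * M.submatrix (↑) (↑) * diagonal (fun i : I => d i) := by
    ext i j
    simp only [submatrix_apply, mul_diagonal, diagonal_mul]
  have hprod : (∏ i : I, d i) * ∏ i : I, d i = 1 := by
    rw [← prod_mul_distrib]
    exact prod_eq_one fun i _ => hd i
  rw [principalMinor, principalMinor, hsub, det_mul, det_mul, det_diagonal, mul_right_comm, hprod,
    one_mul]

lemma logLik_diagonal_mul_mul_diagonal {d : ι → ℝ} (hd : ∀ i, d i * d i = 1)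
    (u : Finset ι → ℝ) (M : Matrix ι ι ℝ) :
    logLik u (diagonal d * M * diagonal d) = logLik u M := by
  have hone : diagonal d * M * diagonal d + 1 = diagonal d * (M + 1) * diagonal d := by
    rw [mul_add, add_mul, mul_one, diagonal_mul_diagonal, funext hd, diagonal_one]
  simp only [logLik, principalMinor_diagonal_mul_mul_diagonal hd, hone, ← principalMinor_univ]

end LogLik

lemma Function.Even.deriv_zero {f : ℝ → ℝ} (hf : Function.Even f) : deriv f 0 = 0 := by
  have h := deriv_comp_neg (f := f) (x := 0)
  rw [show (fun x => f (-x)) = f from funext hf, neg_zero] at h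
  linarith

section Derivative

variable {ι : Type*} [Fintype ι] [DecidableEq ι] {Θ : Matrix ι ι ℝ} {B : Finset ι} {a b : ι}

theorem deriv_logLik_symDir_of_mem (hΘ : IsBlockDiag Θ B) (hpd : Θ.PosDef) (ha : a ∈ B)
    (hb : b ∈ B) (u : Finset ι → ℝ) :
    deriv (fun t : ℝ => logLik u (Θ + t • symDir a b)) 0
      = deriv (fun t : ℝ =>
          logLik (restrictData u B) (blockSub Θ B + t • symDir ⟨a, ha⟩ ⟨b, hb⟩)) 0 := by
  have hline : Tendsto (fun t : ℝ => Θ + t • symDir a b) (𝓝 0) (𝓝 Θ) :=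
    (by fun_prop : Continuous fun t : ℝ => Θ + t • symDir a b).tendsto' 0 Θ (by simp)
  have hlocal : (fun t : ℝ => logLik u (Θ + t • symDir a b)) =ᶠ[𝓝 0] fun t =>
      logLik (restrictData u B) (blockSub Θ B + t • symDir ⟨a, ha⟩ ⟨b, hb⟩)
        + logLik (restrictData u Bᶜ) (blockSub Θ Bᶜ) := by
    filter_upwards [hline.eventually hpd.eventually_principalMinor_ne_zero] with t ht
    rw [logLik_eq_add_of_isBlockDiag (hΘ.add ((isBlockDiag_symDir ha hb).smul t)) ht.1 ht.2,
      blockSub_add, blockSub_add, blockSub_smul, blockSub_smul, blockSub_symDir ha hb,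
      blockSub_symDir_of_notMem b (notMem_compl.mpr ha), smul_zero, add_zero]
  rw [hlocal.deriv_eq, deriv_add_const]

theorem logLik_add_neg_smul (hΘ : IsBlockDiag Θ B) {E : Matrix ι ι ℝ}
    (hE : ∀ i j, (i ∈ B ↔ j ∈ B) → E i j = 0) (u : Finset ι → ℝ) (t : ℝ) :
    logLik u (Θ + (-t) • E) = logLik u (Θ + t • E) := by
  set d : ι → ℝ := fun i => if i ∈ B then -1 else 1
  have hd (i : ι) : d i * d i = 1 := by by_cases hi : i ∈ B <;> simp [d, hi]
  have hconj : diagonal d * (Θ + t • E) * diagonal d = Θ + (-t) • E := by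
    ext i j
    simp only [mul_diagonal, diagonal_mul, Matrix.add_apply, Matrix.smul_apply, smul_eq_mul, d]
    by_cases hi : i ∈ B <;> by_cases hj : j ∈ B <;>
      simp [hi, hj, hΘ i j, hE i j]
  rw [← hconj, logLik_diagonal_mul_mul_diagonal hd]

theorem deriv_logLik_symDir_of_notMem (hΘ : IsBlockDiag Θ B) (ha : a ∈ B) (hb : b ∉ B)
    (u : Finset ι → ℝ) : deriv (fun t : ℝ => logLik u (Θ + t • symDir a b)) 0 = 0 :=
  Function.Even.deriv_zero fun t =>
    logLik_add_neg_smul hΘ (fun _ _ => symDir_apply_of_mem_iff_mem ha hb) u t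

end Derivative

section Partition

variable {ι : Type*} {π : Finset (Finset ι)} {Θ : Matrix ι ι ℝ}

lemma isBlockDiag_of_mem_partition (hcover : ∀ a, ∃ B ∈ π, a ∈ B)
    (hblock : ∀ B ∈ π, ∀ B' ∈ π, B ≠ B' → ∀ a ∈ B, ∀ b ∈ B', Θ a b = 0) {B : Finset ι}
    (hB : B ∈ π) : IsBlockDiag Θ B := by
  intro i j hij
  by_cases hi : i ∈ B
  · obtain ⟨B', hB', hjB'⟩ := hcover j
    exact hblock B hB B' hB' (by rintro rfl; exact hij.mp hi hjB') i hi j hjB'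
  · obtain ⟨B', hB', hiB'⟩ := hcover i
    exact hblock B' hB' B hB (by rintro rfl; exact hi hiB') i hiB' j (not_not.mp (mt hij.mpr hi))

variable [Fintype ι] [DecidableEq ι]

lemma dotProduct_mulVec_eq_sum_blockSub (hdisj : (π : Set (Finset ι)).PairwiseDisjoint id)
    (hcover : ∀ a, ∃ B ∈ π, a ∈ B) (hΘ : ∀ B ∈ π, IsBlockDiag Θ B) (x : ι → ℝ) :
    x ⬝ᵥ Θ *ᵥ x = ∑ B ∈ π, (fun i : B => x i) ⬝ᵥ blockSub Θ B *ᵥ fun i => x i := by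
  have huniv : π.biUnion id = univ :=
    eq_univ_of_forall fun a => by simpa only [mem_biUnion, id] using hcover a
  rw [dotProduct, ← huniv, sum_biUnion hdisj]
  refine sum_congr rfl fun B hB => ?_
  rw [id, ← sum_coe_sort B]
  refine sum_congr rfl fun i _ => congrArg (x i * ·) ?_
  rw [mulVec, dotProduct, ← sum_subset (subset_univ B) fun j _ hj => ?_, ← sum_coe_sort B]
  · rfl
  · rw [hΘ B hB i j (iff_of_true i.2 hj), zero_mul]

theorem posDef_of_partition (hdisj : (π : Set (Finset ι)).PairwiseDisjoint id)
    (hcover : ∀ a, ∃ B ∈ π, a ∈ B) (hsymm : Θ.IsSymm) (hΘ : ∀ B ∈ π, IsBlockDiag Θ B)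
    (hpd : ∀ B ∈ π, (blockSub Θ B).PosDef) : Θ.PosDef := by
  refine .of_dotProduct_mulVec_pos (isHermitian_iff_isSymm.mpr hsymm) fun x hx => ?_
  obtain ⟨i, hi⟩ := Function.ne_iff.mp hx
  obtain ⟨B₀, hB₀, hiB₀⟩ := hcover i
  rw [star_trivial, dotProduct_mulVec_eq_sum_blockSub hdisj hcover hΘ]
  refine sum_pos' (fun B hB => ?_) ⟨B₀, hB₀, ?_⟩
  · simpa using (hpd B hB).posSemidef.dotProduct_mulVec_nonneg fun j : B => x j
  · simpa using (hpd B₀ hB₀).dotProduct_mulVec_pos (x := fun j : B₀ => x j)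
      (Function.ne_iff.mpr ⟨⟨i, hiB₀⟩, hi⟩)

end Partition

theorem isCriticalPoint_of_blocks_general {n : ℕ}
    (π : Finset (Finset (Fin n)))
    (hdisj : ∀ B ∈ π, ∀ B' ∈ π, B ≠ B' → Disjoint B B')
    (hcover : ∀ a : Fin n, ∃ B ∈ π, a ∈ B)
    (u : Finset (Fin n) → ℝ)
    (Θ : Matrix (Fin n) (Fin n) ℝ) (hsymm : Θ.IsSymm)
    (hblock : ∀ B ∈ π, ∀ B' ∈ π, B ≠ B' → ∀ a ∈ B, ∀ b ∈ B', Θ a b = 0)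
    (hpd : ∀ B ∈ π, (blockSub Θ B).PosDef)
    (hcrit : ∀ B ∈ π, IsCriticalPoint (restrictData u B) (blockSub Θ B)) :
    IsCriticalPoint u Θ := by
  have hΘ (B : Finset (Fin n)) (hB : B ∈ π) : IsBlockDiag Θ B :=
    isBlockDiag_of_mem_partition hcover hblock hB
  intro a b
  obtain ⟨B, hB, ha⟩ := hcover a
  by_cases hb : b ∈ B
  · rw [deriv_logLik_symDir_of_mem (hΘ B hB)
      (posDef_of_partition hdisj hcover hsymm hΘ hpd) ha hb]
    exact hcrit B hB _ _
  · exact deriv_logLik_symDir_of_notMem (hΘ B hB) ha hb u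

/-- If `Θ` is symmetric and block diagonal with respect to the set partition `π`,
with positive-definite diagonal blocks, and each block `Θ_B` is a critical point of the
restricted log-likelihood `L_{v^{(B)}}`, then `Θ` is a critical point of `L_u`. -/
theorem isCriticalPoint_of_blocks {n : ℕ}
    (π : Finset (Finset (Fin n)))
    (hne : ∀ B ∈ π, B.Nonempty)
    (hdisj : ∀ B ∈ π, ∀ B' ∈ π, B ≠ B' → Disjoint B B')
    (hcover : ∀ a : Fin n, ∃ B ∈ π, a ∈ B)
    (u : Finset (Fin n) → ℝ)
    (Θ : Matrix (Fin n) (Fin n) ℝ) (hsymm : Θ.IsSymm)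
    (hblock : ∀ B ∈ π, ∀ B' ∈ π, B ≠ B' → ∀ a ∈ B, ∀ b ∈ B', Θ a b = 0)
    (hpd : ∀ B ∈ π, (blockSub Θ B).PosDef)
    (hcrit : ∀ B ∈ π, IsCriticalPoint (restrictData u B) (blockSub Θ B)) :
    IsCriticalPoint u Θ :=
  isCriticalPoint_of_blocks_general π hdisj hcover u Θ hsymm hblock hpd hcrit
end
end

section
/- Let u = (u_∅, u_1, u_2, u_3, u_{12}, u_{13}, u_{23}, u_{123}) be a vector of positive real numbers with (u_1 + u_{13})(u_2 + u_{23}) > (u_∅ + u_3)(u_{12} + u_{123}). Then the symmetric 3×3 matrix Θ̂ with θ̂_{13} = θ̂_{23} = 0, θ̂_{11} = (u_1 + u_{13})/(u_∅ + u_3), θ̂_{22} = (u_2 + u_{23})/(u_∅ + u_3), θ̂_{12} = ε·√((u_1+u_{13})(u_2+u_{23}) − (u_∅+u_3)(u_{12}+u_{123}))/(u_∅ + u_3) (for either sign ε = ±1), and θ̂_{33} = (u_3 + u_{13} + u_{23} + u_{123})/(u_∅ + u_1 + u_2 + u_{12}) is a critical point of L_u: all six partial derivatives of L_u vanish at Θ̂.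 -/
/-- The log-likelihood function of the 3×3 DPP model in the six entries
`(θ₁₁, θ₁₂, θ₁₃, θ₂₂, θ₂₃, θ₃₃)` of a symmetric matrix, for data
`u = (u∅, u₁, u₂, u₃, u₁₂, u₁₃, u₂₃, u₁₂₃)`. -/
noncomputable def L3 (u0 u1 u2 u3 u12 u13 u23 u123 : ℝ)
    (t11 t12 t13 t22 t23 t33 : ℝ) : ℝ :=
  u1 * Real.log t11 + u2 * Real.log t22 + u3 * Real.log t33
    + u12 * Real.log (t11 * t22 - t12 ^ 2)
    + u13 * Real.log (t11 * t33 - t13 ^ 2)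
    + u23 * Real.log (t22 * t33 - t23 ^ 2)
    + u123 * Real.log (Matrix.det !![t11, t12, t13; t12, t22, t23; t13, t23, t33])
    - (u0 + u1 + u2 + u3 + u12 + u13 + u23 + u123) *
        Real.log (Matrix.det (!![t11, t12, t13; t12, t22, t23; t13, t23, t33] + 1))

/-- All six partial derivatives of `L_u` with respect to
`θ₁₁, θ₁₂, θ₁₃, θ₂₂, θ₂₃, θ₃₃` vanish at `(t11, t12, t13, t22, t23, t33)`. -/
noncomputable def IsCritical3 (u0 u1 u2 u3 u12 u13 u23 u123 : ℝ)
    (t11 t12 t13 t22 t23 t33 : ℝ) : Prop :=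
  deriv (fun s => L3 u0 u1 u2 u3 u12 u13 u23 u123 s t12 t13 t22 t23 t33) t11 = 0 ∧
  deriv (fun s => L3 u0 u1 u2 u3 u12 u13 u23 u123 t11 s t13 t22 t23 t33) t12 = 0 ∧
  deriv (fun s => L3 u0 u1 u2 u3 u12 u13 u23 u123 t11 t12 s t22 t23 t33) t13 = 0 ∧
  deriv (fun s => L3 u0 u1 u2 u3 u12 u13 u23 u123 t11 t12 t13 s t23 t33) t22 = 0 ∧
  deriv (fun s => L3 u0 u1 u2 u3 u12 u13 u23 u123 t11 t12 t13 t22 s t33) t23 = 0 ∧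
  deriv (fun s => L3 u0 u1 u2 u3 u12 u13 u23 u123 t11 t12 t13 t22 t23 s) t33 = 0

/-! At a matrix with `θ₁₃ = θ₂₃ = 0` both determinants factor along the blocks `{1,2}` and `{3}`,
so near such a point `L_u` is the sum of the 2×2 log-likelihood `L2` of the marginal data
`(u∅+u₃, u₁+u₁₃, u₂+u₂₃, u₁₂+u₁₂₃)` in `(θ₁₁, θ₁₂, θ₂₂)` and the 1×1 log-likelihood `L1` of
`(u∅+u₁+u₂+u₁₂, u₃+u₁₃+u₂₃+u₁₂₃)` in `θ₃₃`; the four block partials are those of `L2` and `L1`,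
which vanish at their explicit critical points. Flipping the signs of `θ₁₃` and `θ₂₃` (conjugation by
`diag(1, 1, -1)`) leaves `L_u` unchanged, so the remaining two partials vanish by evenness. -/

open Real Topology

theorem Function.Even.deriv_zero_s13 {F : Type*} [NormedAddCommGroup F] [NormedSpace ℝ F]
    {f : ℝ → F} (hf : f.Even) : deriv f 0 = 0 := by
  have h := deriv_comp_neg (f := f) (x := 0)
  simp only [hf _, neg_zero] at h
  have h2 : (2 : ℝ) • deriv f 0 = 0 := by rw [two_smul]; exact eq_neg_iff_add_eq_zero.mp h
  exact (smul_eq_zero.mp h2).resolve_left two_ne_zero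

noncomputable def L2 (v0 v1 v2 v12 a b c : ℝ) : ℝ :=
  v1 * log a + v2 * log c + v12 * log (a * c - b ^ 2)
    - (v0 + v1 + v2 + v12) * log ((a + 1) * (c + 1) - b ^ 2)

noncomputable def L1 (w0 w1 d : ℝ) : ℝ :=
  w1 * log d - (w0 + w1) * log (d + 1)

section TwoByTwo

variable {v0 v1 v2 v12 : ℝ}

theorem L2_comm (a b c : ℝ) : L2 v0 v1 v2 v12 a b c = L2 v0 v2 v1 v12 c b a := by
  unfold L2
  rw [mul_comm c a, mul_comm (c + 1)]
  ring

theorem hasDerivAt_L2_t11 {a b c : ℝ} (ha : a ≠ 0) (hP : a * c - b ^ 2 ≠ 0)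
    (hQ : (a + 1) * (c + 1) - b ^ 2 ≠ 0) :
    HasDerivAt (fun s => L2 v0 v1 v2 v12 s b c)
      (v1 / a + v12 * c / (a * c - b ^ 2)
        - (v0 + v1 + v2 + v12) * (c + 1) / ((a + 1) * (c + 1) - b ^ 2)) a := by
  have hP' : HasDerivAt (fun s => s * c - b ^ 2) c a := by
    simpa using ((hasDerivAt_id a).mul_const c).sub_const (b ^ 2)
  have hQ' : HasDerivAt (fun s => (s + 1) * (c + 1) - b ^ 2) (c + 1) a := by
    simpa using (((hasDerivAt_id a).add_const 1).mul_const (c + 1)).sub_const (b ^ 2)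
  refine ((((hasDerivAt_log ha).const_mul v1).add_const (v2 * log c)).add
    ((hP'.log hP).const_mul v12)).sub ((hQ'.log hQ).const_mul _) |>.congr_deriv ?_
  ring

theorem hasDerivAt_L2_t12 {a b c : ℝ} (hP : a * c - b ^ 2 ≠ 0)
    (hQ : (a + 1) * (c + 1) - b ^ 2 ≠ 0) :
    HasDerivAt (fun s => L2 v0 v1 v2 v12 a s c)
      (2 * b * ((v0 + v1 + v2 + v12) / ((a + 1) * (c + 1) - b ^ 2) - v12 / (a * c - b ^ 2))) b := by
  have hP' : HasDerivAt (fun s => a * c - s ^ 2) (-(2 * b)) b := by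
    simpa using (hasDerivAt_pow 2 b).const_sub (a * c)
  have hQ' : HasDerivAt (fun s => (a + 1) * (c + 1) - s ^ 2) (-(2 * b)) b := by
    simpa using (hasDerivAt_pow 2 b).const_sub ((a + 1) * (c + 1))
  refine ((hasDerivAt_const b (v1 * log a + v2 * log c)).add
    ((hP'.log hP).const_mul v12)).sub ((hQ'.log hQ).const_mul _) |>.congr_deriv ?_
  ring

theorem L2_critical_det {b : ℝ} (hv0 : v0 ≠ 0) (hb : b ^ 2 = (v1 * v2 - v0 * v12) / v0 ^ 2) :
    v1 / v0 * (v2 / v0) - b ^ 2 = v12 / v0 := by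
  rw [hb]; field_simp; ring

theorem L2_critical_det_add_one {b : ℝ} (hv0 : v0 ≠ 0)
    (hb : b ^ 2 = (v1 * v2 - v0 * v12) / v0 ^ 2) :
    (v1 / v0 + 1) * (v2 / v0 + 1) - b ^ 2 = (v0 + v1 + v2 + v12) / v0 := by
  rw [hb]; field_simp; ring

theorem hasDerivAt_L2_t11_critical {b : ℝ} (hv0 : 0 < v0) (hv1 : 0 < v1) (hv2 : 0 < v2)
    (hv12 : 0 < v12) (hb : b ^ 2 = (v1 * v2 - v0 * v12) / v0 ^ 2) :
    HasDerivAt (fun s => L2 v0 v1 v2 v12 s b (v2 / v0)) 0 (v1 / v0) := by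
  have hP := L2_critical_det hv0.ne' hb
  have hQ := L2_critical_det_add_one hv0.ne' hb
  refine (hasDerivAt_L2_t11 (by positivity) (by rw [hP]; positivity)
    (by rw [hQ]; positivity)).congr_deriv ?_
  rw [hP, hQ]; field_simp; ring

theorem hasDerivAt_L2_t12_critical {b : ℝ} (hv0 : 0 < v0) (hv1 : 0 < v1) (hv2 : 0 < v2)
    (hv12 : 0 < v12) (hb : b ^ 2 = (v1 * v2 - v0 * v12) / v0 ^ 2) :
    HasDerivAt (fun s => L2 v0 v1 v2 v12 (v1 / v0) s (v2 / v0)) 0 b := by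
  have hP := L2_critical_det hv0.ne' hb
  have hQ := L2_critical_det_add_one hv0.ne' hb
  refine (hasDerivAt_L2_t12 (by rw [hP]; positivity) (by rw [hQ]; positivity)).congr_deriv ?_
  rw [hP, hQ]; field_simp; ring

theorem hasDerivAt_L2_t22_critical {b : ℝ} (hv0 : 0 < v0) (hv1 : 0 < v1) (hv2 : 0 < v2)
    (hv12 : 0 < v12) (hb : b ^ 2 = (v1 * v2 - v0 * v12) / v0 ^ 2) :
    HasDerivAt (fun s => L2 v0 v1 v2 v12 (v1 / v0) b s) 0 (v2 / v0) := by
  rw [show (fun s => L2 v0 v1 v2 v12 (v1 / v0) b s) = fun s => L2 v0 v2 v1 v12 s b (v1 / v0) from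
    funext fun s => L2_comm _ _ _]
  exact hasDerivAt_L2_t11_critical hv0 hv2 hv1 hv12 (by rw [hb, mul_comm v1])

end TwoByTwo

theorem hasDerivAt_L1 {w0 w1 d : ℝ} (hd : d ≠ 0) (hd1 : d + 1 ≠ 0) :
    HasDerivAt (L1 w0 w1) (w1 / d - (w0 + w1) / (d + 1)) d := by
  refine ((hasDerivAt_log hd).const_mul w1).sub
    ((((hasDerivAt_id d).add_const 1).log hd1).const_mul _) |>.congr_deriv ?_
  simp [div_eq_mul_inv]

theorem hasDerivAt_L1_critical {w0 w1 : ℝ} (hw0 : 0 < w0) (hw1 : 0 < w1) :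
    HasDerivAt (L1 w0 w1) 0 (w1 / w0) := by
  refine (hasDerivAt_L1 (by positivity) (by positivity)).congr_deriv ?_
  field_simp; ring

section Block

variable {u0 u1 u2 u3 u12 u13 u23 u123 : ℝ}

theorem L3_neg_t13_neg_t23 (a b e c f d : ℝ) :
    L3 u0 u1 u2 u3 u12 u13 u23 u123 a b (-e) c (-f) d =
      L3 u0 u1 u2 u3 u12 u13 u23 u123 a b e c f d := by
  simp [L3, Matrix.det_fin_three]

theorem L3_block_eq {a b c d : ℝ} (ha : 0 < a) (hc : 0 < c) (hd : 0 < d)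
    (hP : 0 < a * c - b ^ 2) :
    L3 u0 u1 u2 u3 u12 u13 u23 u123 a b 0 c 0 d =
      L2 (u0 + u3) (u1 + u13) (u2 + u23) (u12 + u123) a b c
        + L1 (u0 + u1 + u2 + u12) (u3 + u13 + u23 + u123) d := by
  have hdet : Matrix.det !![a, b, 0; b, c, 0; 0, 0, d] = (a * c - b ^ 2) * d := by
    simp [Matrix.det_fin_three]; ring
  have hdet1 : Matrix.det (!![a, b, 0; b, c, 0; 0, 0, d] + 1)
      = ((a + 1) * (c + 1) - b ^ 2) * (d + 1) := by
    simp [Matrix.det_fin_three]; ring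
  have hQ : 0 < (a + 1) * (c + 1) - b ^ 2 := by nlinarith
  simp only [L3, L2, L1, hdet, hdet1, zero_pow two_ne_zero, sub_zero]
  rw [log_mul ha.ne' hd.ne', log_mul hc.ne' hd.ne', log_mul hP.ne' hd.ne',
    log_mul hQ.ne' (by positivity)]
  ring

theorem L3_block_eventuallyEq {a b c d : ℝ → ℝ} {x : ℝ} (ha : ContinuousAt a x)
    (hb : ContinuousAt b x) (hc : ContinuousAt c x) (hd : ContinuousAt d x)
    (ha0 : 0 < a x) (hc0 : 0 < c x) (hd0 : 0 < d x) (hP : 0 < a x * c x - b x ^ 2) :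
    (fun s => L3 u0 u1 u2 u3 u12 u13 u23 u123 (a s) (b s) 0 (c s) 0 (d s)) =ᶠ[𝓝 x]
      fun s => L2 (u0 + u3) (u1 + u13) (u2 + u23) (u12 + u123) (a s) (b s) (c s)
        + L1 (u0 + u1 + u2 + u12) (u3 + u13 + u23 + u123) (d s) := by
  filter_upwards [ha.eventually (lt_mem_nhds ha0), hc.eventually (lt_mem_nhds hc0),
    hd.eventually (lt_mem_nhds hd0), ((ha.mul hc).sub (hb.pow 2)).eventually (lt_mem_nhds hP)]
    with s ha hc hd hP
  exact L3_block_eq ha hc hd hP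

end Block

/-- For positive data with `(u₁+u₁₃)(u₂+u₂₃) > (u∅+u₃)(u₁₂+u₁₂₃)`, the symmetric
matrix with a 2×2 block `(θ̂₁₁, θ̂₁₂, θ̂₂₂)` and a 1×1 block `θ̂₃₃` given by
`θ̂₁₁ = (u₁+u₁₃)/(u∅+u₃)`, `θ̂₂₂ = (u₂+u₂₃)/(u∅+u₃)`,
`θ̂₁₂ = ±√((u₁+u₁₃)(u₂+u₂₃) − (u∅+u₃)(u₁₂+u₁₂₃))/(u∅+u₃)`,
`θ̂₃₃ = (u₃+u₁₃+u₂₃+u₁₂₃)/(u∅+u₁+u₂+u₁₂)`, and `θ̂₁₃ = θ̂₂₃ = 0`,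
is a critical point of `L_u`. -/
theorem threeByThree_block_critical (u0 u1 u2 u3 u12 u13 u23 u123 : ℝ)
    (h0 : 0 < u0) (h1 : 0 < u1) (h2 : 0 < u2) (h3 : 0 < u3)
    (h12 : 0 < u12) (h13 : 0 < u13) (h23 : 0 < u23) (h123 : 0 < u123)
    (hgt : (u1 + u13) * (u2 + u23) > (u0 + u3) * (u12 + u123))
    (ε : ℝ) (hε : ε = 1 ∨ ε = -1)
    (t11 t12 t22 t33 : ℝ)
    (ht11 : t11 = (u1 + u13) / (u0 + u3))
    (ht22 : t22 = (u2 + u23) / (u0 + u3))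
    (ht12 : t12 = ε * (Real.sqrt ((u1 + u13) * (u2 + u23) - (u0 + u3) * (u12 + u123))
      / (u0 + u3)))
    (ht33 : t33 = (u3 + u13 + u23 + u123) / (u0 + u1 + u2 + u12)) :
    IsCritical3 u0 u1 u2 u3 u12 u13 u23 u123 t11 t12 0 t22 0 t33 := by
  have hA : 0 < u0 + u3 := by positivity
  have hv1 : 0 < u1 + u13 := by positivity
  have hv2 : 0 < u2 + u23 := by positivity
  have hv12 : 0 < u12 + u123 := by positivity
  have hb : t12 ^ 2 = ((u1 + u13) * (u2 + u23) - (u0 + u3) * (u12 + u123)) / (u0 + u3) ^ 2 := by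
    rcases hε with rfl | rfl <;> rw [ht12, mul_pow, div_pow, sq_sqrt (by linarith)] <;> ring
  have hP : 0 < t11 * t22 - t12 ^ 2 := by
    rw [ht11, ht22, L2_critical_det hA.ne' hb]; positivity
  have p11 : 0 < t11 := by rw [ht11]; positivity
  have p22 : 0 < t22 := by rw [ht22]; positivity
  have p33 : 0 < t33 := by rw [ht33]; positivity
  subst ht11 ht22 ht33
  refine ⟨?_, ?_, ?_, ?_, ?_, ?_⟩
  · exact ((hasDerivAt_L2_t11_critical hA hv1 hv2 hv12 hb).add_const _
      |>.congr_of_eventuallyEq <| L3_block_eventuallyEq continuousAt_id continuousAt_const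
        continuousAt_const continuousAt_const p11 p22 p33 hP).deriv
  · exact ((hasDerivAt_L2_t12_critical hA hv1 hv2 hv12 hb).add_const _
      |>.congr_of_eventuallyEq <| L3_block_eventuallyEq continuousAt_const continuousAt_id
        continuousAt_const continuousAt_const p11 p22 p33 hP).deriv
  · exact Function.Even.deriv_zero_s13 fun s => by simpa using L3_neg_t13_neg_t23 _ _ s _ 0 _
  · exact ((hasDerivAt_L2_t22_critical hA hv1 hv2 hv12 hb).add_const _
      |>.congr_of_eventuallyEq <| L3_block_eventuallyEq continuousAt_const continuousAt_const
        continuousAt_id continuousAt_const p11 p22 p33 hP).deriv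
  · exact Function.Even.deriv_zero_s13 fun s => by simpa using L3_neg_t13_neg_t23 _ _ 0 _ s _
  · exact ((hasDerivAt_L1_critical (by positivity) (by positivity)).const_add _
      |>.congr_of_eventuallyEq <| L3_block_eventuallyEq continuousAt_const continuousAt_const
        continuousAt_const continuousAt_id p11 p22 p33 hP).deriv
end
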